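/- Let q ≥ 2 be odd, let (P, L) be a finite projective plane of order q, and let B be a projective bundle. Let A be the P × L incidence matrix over F₂ (entry 1 iff the point lies on the line) and let M be the P × B incidence matrix over F₂ (entry 1 iff the point lies on the oval). Then the F₂-rank of the block matrix H = (A | M) equals q²+q; equivalently, the right kernel of H, i.e., the space of vectors (x, y) with x : L → F₂ and y : B → F₂ such that for every point p, Σ_{ℓ ∋ p} x(ℓ) + Σ_{o ∋ p} y(o) = 0, has F₂-dimension q²+q+2. -/

import Mathlib

/-! Over `𝔽₂` every column of `H` has `q + 1` ones, an even number, so the all-ones vector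
annihilates the column space and `rank H ≤ |P| - 1 = q² + q`. Conversely, the point-line
incidence matrix `A` satisfies `A Aᵀ = J - I`, since a point lies on `q + 1 ≡ 0` lines and two
points on exactly one; the kernel of `J - I` consists of constant vectors, hence
`rank H ≥ rank A ≥ rank (A Aᵀ) ≥ |P| - 1`. Rank–nullity with `|L| = |B| = q² + q + 1` gives
the kernel dimension. -/

/-- A finite projective plane of order `q`, given by its set of lines (each line a
finite set of points of the ambient point type `P`): any two distinct points lie on
exactly one common line, any two distinct lines meet in exactly one point, there are
four points no three of which are collinear, and every line has `q + 1` points. -/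
structure IsProjectivePlane (q : ℕ) {P : Type} [DecidableEq P] (L : Finset (Finset P)) : Prop where
  exists_unique_line : ∀ p₁ p₂ : P, p₁ ≠ p₂ → ∃! ℓ, ℓ ∈ L ∧ p₁ ∈ ℓ ∧ p₂ ∈ ℓ
  exists_unique_point : ∀ ℓ₁ ∈ L, ∀ ℓ₂ ∈ L, ℓ₁ ≠ ℓ₂ → ∃! p, p ∈ ℓ₁ ∧ p ∈ ℓ₂
  nondeg : ∃ a b c d : P, a ≠ b ∧ a ≠ c ∧ a ≠ d ∧ b ≠ c ∧ b ≠ d ∧ c ≠ d ∧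
      ∀ ℓ ∈ L, (ℓ ∩ ({a, b, c, d} : Finset P)).card ≤ 2
  card_line : ∀ ℓ ∈ L, ℓ.card = q + 1

/-- An oval: a set of `q + 1` points such that every line contains at most two of them. -/
def IsOval (q : ℕ) {P : Type} [DecidableEq P] (L : Finset (Finset P)) (O : Finset P) : Prop :=
  O.card = q + 1 ∧ ∀ ℓ ∈ L, (ℓ ∩ O).card ≤ 2

/-- A projective bundle: a set of `q² + q + 1` ovals, any two of which meet in
exactly one point. -/
def IsProjectiveBundle (q : ℕ) {P : Type} [DecidableEq P] (L : Finset (Finset P))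
    (B : Finset (Finset P)) : Prop :=
  B.card = q ^ 2 + q + 1 ∧ (∀ o ∈ B, IsOval q L o) ∧
    ∀ o₁ ∈ B, ∀ o₂ ∈ B, o₁ ≠ o₂ → (o₁ ∩ o₂).card = 1

open Finset Matrix

namespace Matrix

variable {K m n : Type*} [Field K] [Fintype n]

theorem rank_add_finrank_ker_mulVecLin (M : Matrix m n K) :
    M.rank + Module.finrank K (LinearMap.ker M.mulVecLin) = Fintype.card n := by
  rw [rank, ← Module.finrank_fintype_fun_eq_card K]
  exact LinearMap.finrank_range_add_finrank_ker _

theorem rank_lt_card_height_of_vecMul_eq_zero [Fintype m] {M : Matrix m n K} {v : m → K}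
    (hv : v ≠ 0) (hM : v ᵥ* M = 0) : M.rank < Fintype.card m := by
  have hker : 0 < Module.finrank K (LinearMap.ker Mᵀ.mulVecLin) :=
    Module.finrank_pos_iff_exists_ne_zero.mpr
      ⟨⟨v, by simpa [mulVec_transpose] using hM⟩, by simpa using hv⟩
  have := Mᵀ.rank_add_finrank_ker_mulVecLin
  rw [rank_transpose] at this
  omega

theorem card_width_sub_one_le_rank_of_ker_le_span {M : Matrix m n K} {v : n → K}
    (hM : LinearMap.ker M.mulVecLin ≤ K ∙ v) : Fintype.card n - 1 ≤ M.rank := by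
  have hker : Module.finrank K (LinearMap.ker M.mulVecLin) ≤ 1 :=
    (Submodule.finrank_mono hM).trans ((finrank_span_le_card {v}).trans (by simp))
  have := M.rank_add_finrank_ker_mulVecLin
  omega

theorem ker_mulVecLin_of_ite_le_span_one [DecidableEq n] :
    LinearMap.ker (of fun i j : n => if i = j then (0 : K) else 1).mulVecLin ≤ K ∙ 1 := by
  intro x hx
  have hconst : ∀ i, x i = ∑ j, x j := fun i => by
    have hterm : ∀ j, (if i = j then (0 : K) else 1) * x j = x j - if i = j then x j else 0 :=
      fun j => by split_ifs <;> simp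
    have := congrFun hx i
    simp only [mulVecLin_apply, mulVec, dotProduct, of_apply, hterm, sum_sub_distrib,
      sum_ite_eq, mem_univ, if_true, Pi.zero_apply] at this
    exact (sub_eq_zero.mp this).symm
  rw [Submodule.mem_span_singleton]
  exact ⟨∑ j, x j, funext fun i => by simp [hconst i]⟩

end Matrix

section IncidenceMatrix

variable (R : Type*) [CommSemiring R] {P ι : Type*} [DecidableEq P]

def incidenceMatrix (f : ι → Finset P) : Matrix P ι R :=
  of fun p i => if p ∈ f i then 1 else 0

variable {R}

theorem incidenceMatrix_mul_transpose_apply [Fintype ι] (f : ι → Finset P) (p p' : P) :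
    (incidenceMatrix R f * (incidenceMatrix R f)ᵀ) p p' = #{i | p ∈ f i ∧ p' ∈ f i} := by
  simp only [incidenceMatrix, mul_apply, transpose_apply, of_apply, ite_zero_mul_ite_zero,
    one_mul, sum_boole]

theorem incidenceMatrix_submatrix {κ : Type*} (f : ι → Finset P) (g : κ → ι) :
    (incidenceMatrix R f).submatrix id g = incidenceMatrix R (f ∘ g) :=
  rfl

variable [Fintype P]

theorem one_vecMul_incidenceMatrix (f : ι → Finset P) (i : ι) :
    (1 ᵥ* incidenceMatrix R f) i = #(f i) := by
  simp [incidenceMatrix, vecMul, dotProduct]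

theorem rank_incidenceMatrix_lt_card [Fintype ι] [Nonempty P] (f : ι → Finset P)
    (hf : ∀ i, Even #(f i)) : (incidenceMatrix (ZMod 2) f).rank < Fintype.card P :=
  rank_lt_card_height_of_vecMul_eq_zero one_ne_zero <| funext fun i => by
    rw [one_vecMul_incidenceMatrix, (hf i).natCast_zmod_two, Pi.zero_apply]

end IncidenceMatrix

namespace IsProjectivePlane

variable {q : ℕ} {P : Type} [DecidableEq P] {L : Finset (Finset P)}

instance : Membership P L := ⟨fun ℓ p => p ∈ ℓ.1⟩

noncomputable def line (h : IsProjectivePlane q L) {p₁ p₂ : P} (hp : p₁ ≠ p₂) : L :=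
  ⟨(h.exists_unique_line p₁ p₂ hp).exists.choose,
    (h.exists_unique_line p₁ p₂ hp).exists.choose_spec.1⟩

theorem mem_line (h : IsProjectivePlane q L) {p₁ p₂ : P} (hp : p₁ ≠ p₂) :
    p₁ ∈ h.line hp ∧ p₂ ∈ h.line hp :=
  (h.exists_unique_line p₁ p₂ hp).exists.choose_spec.2

theorem eq_line (h : IsProjectivePlane q L) {p₁ p₂ : P} (hp : p₁ ≠ p₂) {ℓ : L}
    (h₁ : p₁ ∈ ℓ) (h₂ : p₂ ∈ ℓ) : ℓ = h.line hp :=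
  Subtype.ext <| (h.exists_unique_line p₁ p₂ hp).unique ⟨ℓ.2, h₁, h₂⟩
    ⟨(h.line hp).2, h.mem_line hp⟩

theorem eq_of_mem_line_of_mem_line (h : IsProjectivePlane q L) {x y z p : P} (hxy : x ≠ y)
    (hxz : x ≠ z) (hz : z ∉ h.line hxy) (hpy : p ∈ h.line hxy) (hpz : p ∈ h.line hxz) :
    p = x := by
  by_contra hpx
  have : h.line hxy = h.line hxz :=
    (h.eq_line hpx hpy (h.mem_line hxy).1).trans (h.eq_line hpx hpz (h.mem_line hxz).1).symm
  exact hz (this ▸ (h.mem_line hxz).2)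

theorem notMem_line_of_card_inter_le_two (h : IsProjectivePlane q L) {S : Finset P}
    (hS : ∀ ℓ ∈ L, #(ℓ ∩ S) ≤ 2) {x y z : P} (hxy : x ≠ y) (hxz : x ≠ z) (hyz : y ≠ z)
    (hx : x ∈ S := by simp) (hy : y ∈ S := by simp) (hz : z ∈ S := by simp) :
    z ∉ h.line hxy := by
  intro hzl
  have hsub : {x, y, z} ⊆ (h.line hxy).1 ∩ S := by
    simp only [insert_subset_iff, singleton_subset_iff, mem_inter]
    exact ⟨⟨(h.mem_line hxy).1, hx⟩, ⟨(h.mem_line hxy).2, hy⟩, hzl, hz⟩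
  have := (card_le_card hsub).trans (hS _ (h.line hxy).2)
  rw [card_eq_three.mpr ⟨x, y, z, hxy, hxz, hyz, rfl⟩] at this
  omega

theorem toNondegenerate (h : IsProjectivePlane q L) : Configuration.Nondegenerate P L := by
  obtain ⟨a, b, c, d, hab, hac, had, hbc, hbd, hcd, hS⟩ := h.nondeg
  refine ⟨fun ℓ => ?_, fun p => ?_, fun {p₁ p₂ ℓ₁ ℓ₂} h₁ h₂ h₃ h₄ => ?_⟩
  · by_contra! hℓ
    exact absurd (h.eq_line hab (hℓ a) (hℓ b) ▸ hℓ c)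
      (h.notMem_line_of_card_inter_le_two hS hab hac hbc)
  · by_contra! hp
    have hpa := h.eq_of_mem_line_of_mem_line hab hac
      (h.notMem_line_of_card_inter_le_two hS hab hac hbc) (hp _) (hp _)
    have hpd := h.eq_of_mem_line_of_mem_line hbd.symm hcd.symm
      (h.notMem_line_of_card_inter_le_two hS hbd.symm hcd.symm hbc) (hp _) (hp _)
    exact had (hpa ▸ hpd)
  · exact or_iff_not_imp_left.mpr fun hp =>
      (h.eq_line hp h₁ h₂).trans (h.eq_line hp h₃ h₄).symm

theorem exists_config (h : IsProjectivePlane q L) : ∃ (p₁ p₂ p₃ : P) (l₁ l₂ l₃ : L),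
      p₁ ∉ l₂ ∧ p₁ ∉ l₃ ∧ p₂ ∉ l₁ ∧ p₂ ∈ l₂ ∧ p₂ ∈ l₃ ∧ p₃ ∉ l₁ ∧ p₃ ∈ l₂ ∧ p₃ ∉ l₃ := by
  obtain ⟨a, b, c, d, hab, hac, had, hbc, hbd, hcd, hS⟩ := h.nondeg
  exact ⟨a, b, c, h.line had, h.line hbc, h.line hbd,
    h.notMem_line_of_card_inter_le_two hS hbc hab.symm hac.symm,
    h.notMem_line_of_card_inter_le_two hS hbd hab.symm had.symm,
    h.notMem_line_of_card_inter_le_two hS had hab hbd.symm,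
    (h.mem_line hbc).1, (h.mem_line hbd).1,
    h.notMem_line_of_card_inter_le_two hS had hac hcd.symm,
    (h.mem_line hbc).2,
    h.notMem_line_of_card_inter_le_two hS hbd hbc hcd.symm⟩

noncomputable abbrev toProjectivePlane (h : IsProjectivePlane q L) :
    Configuration.ProjectivePlane P L :=
  { h.toNondegenerate with
    mkPoint := fun {ℓ₁ ℓ₂} hℓ =>
      (h.exists_unique_point ℓ₁ ℓ₁.2 ℓ₂ ℓ₂.2 (Subtype.coe_injective.ne hℓ)).exists.choose
    mkPoint_ax := fun {ℓ₁ ℓ₂} hℓ =>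
      (h.exists_unique_point ℓ₁ ℓ₁.2 ℓ₂ ℓ₂.2 (Subtype.coe_injective.ne hℓ)).exists.choose_spec
    mkLine := h.line
    mkLine_ax := h.mem_line
    exists_config := h.exists_config }

theorem card_lines_through_two (h : IsProjectivePlane q L) {p p' : P} (hp : p ≠ p') :
    #{ℓ : L | p ∈ ℓ.1 ∧ p' ∈ ℓ.1} = 1 :=
  card_eq_one.mpr ⟨h.line hp, by
    ext ℓ
    simp only [mem_filter, mem_univ, true_and, mem_singleton]
    exact ⟨fun hℓ => h.eq_line hp hℓ.1 hℓ.2, fun hℓ => hℓ ▸ h.mem_line hp⟩⟩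

section Finite

variable [Fintype P]

theorem order_eq (h : IsProjectivePlane q L) :
    @Configuration.ProjectivePlane.order P L _ h.toProjectivePlane = q := by
  let := h.toProjectivePlane
  obtain ⟨a, b, -, -, hab, -⟩ := h.nondeg
  have hcount : Configuration.pointCount P (h.line hab) = q + 1 :=
    (Nat.card_eq_finsetCard _).trans (h.card_line _ (h.line hab).2)
  have := Configuration.ProjectivePlane.pointCount_eq P (h.line hab)
  omega

theorem card_points (h : IsProjectivePlane q L) : Fintype.card P = q ^ 2 + q + 1 := by
  let := h.toProjectivePlane
  rw [Configuration.ProjectivePlane.card_points P L, h.order_eq]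

theorem card_lines (h : IsProjectivePlane q L) : #L = q ^ 2 + q + 1 := by
  let := h.toProjectivePlane
  rw [← Fintype.card_coe, Configuration.ProjectivePlane.card_lines P L, h.order_eq]

theorem card_lines_through (h : IsProjectivePlane q L) (p : P) :
    #{ℓ : L | p ∈ ℓ.1} = q + 1 := by
  let := h.toProjectivePlane
  have : Nat.card {ℓ : L // p ∈ ℓ.1} = q + 1 :=
    h.order_eq ▸ Configuration.ProjectivePlane.lineCount_eq L p
  rwa [Nat.card_eq_fintype_card, Fintype.card_subtype] at this

theorem incidenceMatrix_mul_transpose (h : IsProjectivePlane q L) (hodd : Odd q) :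
    incidenceMatrix (ZMod 2) ((↑) : L → Finset P) *
        (incidenceMatrix (ZMod 2) ((↑) : L → Finset P))ᵀ =
      of fun p p' => if p = p' then 0 else 1 := by
  ext p p'
  rw [incidenceMatrix_mul_transpose_apply, of_apply]
  split_ifs with hp
  · simp only [hp, and_self, h.card_lines_through, hodd.add_one.natCast_zmod_two]
  · rw [h.card_lines_through_two hp, Nat.cast_one]

theorem card_sub_one_le_rank_incidenceMatrix (h : IsProjectivePlane q L) (hodd : Odd q) :
    Fintype.card P - 1 ≤ (incidenceMatrix (ZMod 2) ((↑) : L → Finset P)).rank :=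
  calc Fintype.card P - 1
      ≤ (incidenceMatrix (ZMod 2) ((↑) : L → Finset P) *
          (incidenceMatrix (ZMod 2) ((↑) : L → Finset P))ᵀ).rank :=
        h.incidenceMatrix_mul_transpose hodd ▸
          card_width_sub_one_le_rank_of_ker_le_span ker_mulVecLin_of_ite_le_span_one
    _ ≤ _ := rank_mul_le_left _ _

end Finite

end IsProjectivePlane

theorem statement_11_general (q : ℕ) (hodd : Odd q) (P : Type) [Fintype P] [DecidableEq P]
    (L : Finset (Finset P)) (hL : IsProjectivePlane q L)
    (B : Finset (Finset P)) (hB : IsProjectiveBundle q L B) :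
    let H : Matrix P ({ℓ // ℓ ∈ L} ⊕ {o // o ∈ B}) (ZMod 2) :=
      Matrix.of fun p c =>
        Sum.elim (fun ℓ : {ℓ // ℓ ∈ L} => if p ∈ ℓ.1 then (1 : ZMod 2) else 0)
          (fun o : {o // o ∈ B} => if p ∈ o.1 then 1 else 0) c
    H.rank = q ^ 2 + q ∧
    Module.finrank (ZMod 2) ↥(LinearMap.ker H.mulVecLin) = q ^ 2 + q + 2 := by
  intro H
  obtain ⟨hBcard, hBoval, -⟩ := hB
  have hH : H = incidenceMatrix (ZMod 2) (Sum.elim (↑) (↑) : L ⊕ B → Finset P) := by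
    ext p (ℓ | o) <;> rfl
  have hP := hL.card_points
  have : Nonempty P := Fintype.card_pos_iff.mp (by omega)
  have hupper : H.rank < Fintype.card P := by
    rw [hH]
    refine rank_incidenceMatrix_lt_card _ ?_
    rintro (ℓ | o)
    · exact hL.card_line ℓ ℓ.2 ▸ hodd.add_one
    · exact (hBoval o o.2).1 ▸ hodd.add_one
  have hlower : Fintype.card P - 1 ≤ H.rank := by
    refine (hL.card_sub_one_le_rank_incidenceMatrix hodd).trans ?_
    have := rank_submatrix_le
      (incidenceMatrix (ZMod 2) (Sum.elim (↑) (↑) : L ⊕ B → Finset P)) id Sum.inl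
    rwa [incidenceMatrix_submatrix, Sum.elim_comp_inl, ← hH] at this
  have hrank : H.rank = q ^ 2 + q := by omega
  refine ⟨hrank, ?_⟩
  have := H.rank_add_finrank_ker_mulVecLin
  rw [Fintype.card_sum, Fintype.card_coe, Fintype.card_coe, hL.card_lines, hBcard] at this
  omega

/-- For `q ≥ 2` odd, a finite projective plane of order `q` with line set `L`
and a projective bundle `B`, the `F₂`-rank of the concatenated point-line / point-oval
incidence matrix `H = (A | M)` equals `q² + q`; equivalently its right kernel has
`F₂`-dimension `q² + q + 2`. -/
theorem statement_11 (q : ℕ) (hq : 2 ≤ q) (hodd : Odd q) (P : Type) [Fintype P] [DecidableEq P]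
    (L : Finset (Finset P)) (hL : IsProjectivePlane q L)
    (B : Finset (Finset P)) (hB : IsProjectiveBundle q L B) :
    let H : Matrix P ({ℓ // ℓ ∈ L} ⊕ {o // o ∈ B}) (ZMod 2) :=
      Matrix.of fun p c =>
        Sum.elim (fun ℓ : {ℓ // ℓ ∈ L} => if p ∈ ℓ.1 then (1 : ZMod 2) else 0)
          (fun o : {o // o ∈ B} => if p ∈ o.1 then 1 else 0) c
    H.rank = q ^ 2 + q ∧
    Module.finrank (ZMod 2) ↥(LinearMap.ker H.mulVecLin) = q ^ 2 + q + 2 :=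
  statement_11_general q hodd P L hL B hB
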